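/- arXiv:2110.13800 — 2 statements merged into one kernel-verified Lean document; each statement's English description precedes it below -/
import Mathlib

section
/- Let q > 1, θ ∈ (0,1) and γ ∈ (0,1) satisfy q(θ-1) > -1 and γ < 1/q. Then there exists a constant C = C(T,q,θ) such that for all t ∈ [0,T] and all h ∈ (0,1): ∫_0^t ∫_ℝ (r+h)^{q(θ-1)} · |𝟙_{|z| < r+h} - 𝟙_{|z| < r}|^q dz dr ≤ C·h^{γq}. -/
/-! The inner integrand is `(r + h) ^ q(θ-1)` times the indicator of the annulus `r ≤ |z| < r + h`,
of measure `2h`. So the double integral is `2h ∫₀ᵗ (r + h) ^ q(θ-1) dr`, which is at most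
`2h (T + 1) ^ (q(θ-1)+1) / (q(θ-1)+1)` because `q(θ-1) > -1`; finally `h ≤ h ^ γq` as `h < 1`
and `γq < 1`. -/

open MeasureTheory Real Set

lemma abs_ite_sub_ite_rpow_eq_indicator {r s q : ℝ} (hrs : r ≤ s) (hq : q ≠ 0) (z : ℝ) :
    |(if |z| < s then (1 : ℝ) else 0) - (if |z| < r then (1 : ℝ) else 0)| ^ q
      = (Ioo (-s) s \ Ioo (-r) r).indicator 1 z := by
  simp only [indicator, mem_sdiff, mem_Ioo, ← abs_lt, Pi.one_apply]
  by_cases hr : |z| < r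
  · simp [hr, hr.trans_le hrs, zero_rpow hq]
  · by_cases hs : |z| < s <;> simp [hr, hs, zero_rpow hq]

lemma volume_Ioo_sdiff_Ioo {r s : ℝ} (hr : 0 ≤ r) (hrs : r ≤ s) :
    volume (Ioo (-s) s \ Ioo (-r) r) = ENNReal.ofReal (2 * (s - r)) := by
  rw [measure_sdiff (Ioo_subset_Ioo (by linarith) hrs) measurableSet_Ioo.nullMeasurableSet
      measure_Ioo_lt_top.ne, Real.volume_Ioo, Real.volume_Ioo,
    ← ENNReal.ofReal_sub _ (by linarith)]
  ring_nf

lemma integral_abs_ite_sub_ite_rpow {r s q : ℝ} (hr : 0 ≤ r) (hrs : r ≤ s) (hq : q ≠ 0) :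
    ∫ z : ℝ, |(if |z| < s then (1 : ℝ) else 0) - (if |z| < r then (1 : ℝ) else 0)| ^ q
      = 2 * (s - r) := by
  simp_rw [abs_ite_sub_ite_rpow_eq_indicator hrs hq]
  rw [integral_indicator_one (measurableSet_Ioo.diff measurableSet_Ioo), measureReal_def,
    volume_Ioo_sdiff_Ioo hr hrs, ENNReal.toReal_ofReal (by linarith)]

lemma integral_add_rpow_le {a t T h : ℝ} (ha : -1 < a) (ht : t ∈ Icc 0 T) (hh : h ∈ Icc 0 1) :
    ∫ r in (0 : ℝ)..t, (r + h) ^ a ≤ (T + 1) ^ (a + 1) / (a + 1) := by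
  rw [intervalIntegral.integral_comp_add_right (· ^ a) h, integral_rpow (Or.inl ha), zero_add]
  have hmono : (t + h) ^ (a + 1) ≤ (T + 1) ^ (a + 1) :=
    rpow_le_rpow (by linarith [ht.1, hh.1]) (by linarith [ht.2, hh.2]) (by linarith)
  gcongr
  · linarith
  · linarith [rpow_nonneg hh.1 (a + 1)]

theorem stmt13_general (T q θ γ : ℝ) (hT : 0 < T) (hq : 1 < q)
    (hqθ : -1 < q * (θ - 1)) (hγq : γ < 1 / q) :
    ∃ C : ℝ, 0 < C ∧ ∀ t h : ℝ, t ∈ Set.Icc 0 T → h ∈ Set.Ioo (0 : ℝ) 1 →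
      (∫ r in (0 : ℝ)..t, ∫ z : ℝ,
          (r + h) ^ (q * (θ - 1)) *
            |(if |z| < r + h then (1 : ℝ) else 0) - (if |z| < r then (1 : ℝ) else 0)| ^ q)
        ≤ C * h ^ (γ * q) := by
  set a := q * (θ - 1)
  have ha : 0 < a + 1 := by linarith
  refine ⟨2 * ((T + 1) ^ (a + 1) / (a + 1)), by positivity, fun t h ht hh ↦ ?_⟩
  have hγq_le : γ * q ≤ 1 := ((lt_div_iff₀ (by linarith)).mp hγq).le
  have hinner : ∀ r ∈ uIcc 0 t, ∫ z : ℝ, (r + h) ^ a *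
      |(if |z| < r + h then (1 : ℝ) else 0) - (if |z| < r then (1 : ℝ) else 0)| ^ q
        = 2 * h * (r + h) ^ a := fun r hr ↦ by
    rw [uIcc_of_le ht.1] at hr
    rw [integral_const_mul, integral_abs_ite_sub_ite_rpow hr.1 (by linarith [hh.1]) (by positivity)]
    ring
  calc _ = 2 * h * ∫ r in (0 : ℝ)..t, (r + h) ^ a := by
        rw [intervalIntegral.integral_congr hinner, intervalIntegral.integral_const_mul]
    _ ≤ 2 * h * ((T + 1) ^ (a + 1) / (a + 1)) := by
        gcongr
        · linarith [hh.1]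
        · exact integral_add_rpow_le (by linarith) ht (Ioo_subset_Icc_self hh)
    _ = 2 * ((T + 1) ^ (a + 1) / (a + 1)) * h ^ (1 : ℝ) := by rw [rpow_one]; ring
    _ ≤ 2 * ((T + 1) ^ (a + 1) / (a + 1)) * h ^ (γ * q) :=
        mul_le_mul_of_nonneg_left (rpow_le_rpow_of_exponent_ge hh.1 hh.2.le hγq_le) (by positivity)

theorem stmt13 (T q θ γ : ℝ) (hT : 0 < T) (hq : 1 < q) (hθ : θ ∈ Set.Ioo (0 : ℝ) 1)
    (hγ : γ ∈ Set.Ioo (0 : ℝ) 1) (hqθ : -1 < q * (θ - 1)) (hγq : γ < 1 / q) :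
    ∃ C : ℝ, 0 < C ∧ ∀ t h : ℝ, t ∈ Set.Icc 0 T → h ∈ Set.Ioo (0 : ℝ) 1 →
      (∫ r in (0 : ℝ)..t, ∫ z : ℝ,
          (r + h) ^ (q * (θ - 1)) *
            |(if |z| < r + h then (1 : ℝ) else 0) - (if |z| < r then (1 : ℝ) else 0)| ^ q)
        ≤ C * h ^ (γ * q) :=
  stmt13_general T q θ γ hT hq hqθ hγq
end

section
/- Let H ∈ (0,1/2), T > 0, and h ∈ ℝ. Then ∫_0^T ∫_ℝ (1 - cos(hξ)) · s²/(1 + s²ξ²) · |ξ|^{1-2H} dξ ds ≤ C_{T,H}·|h|^{2H} for a constant C_{T,H} depending only on T and H, and moreover, since (sin(s|ξ|)/ξ)² ≲ min(s², ξ^{-2}) ≲ s²/(1+s²ξ²)·2 for all s, ξ, one has ∫_0^T ∫_ℝ |e^{ihξ}-1|²·(sin(s|ξ|)/|ξ|)²·|ξ|^{1-2H} dξ ds ≤ C'_{T,H}·|h|^{2H}. -/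
open MeasureTheory Real Complex

private lemma outer_le19 {T M : ℝ} (hT : 0 ≤ T) (hM : 0 ≤ M) (f : ℝ → ℝ)
    (hf : ∀ s ∈ Set.Icc (0:ℝ) T, f s ≤ M) :
    (∫ s in (0:ℝ)..T, f s) ≤ T * M := by
  by_cases hint : IntervalIntegrable f volume 0 T
  · calc (∫ s in (0:ℝ)..T, f s) ≤ ∫ _ in (0:ℝ)..T, M :=
        intervalIntegral.integral_mono_on hT hint intervalIntegrable_const hf
    _ = T * M := by simp
  · rw [intervalIntegral.integral_undef hint]; positivity

private lemma integrable_G19 {H : ℝ} (h0 : 0 < H) (h2 : H < 1/2) :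
    Integrable (fun x : ℝ => (1 - Real.cos x) * |x| ^ (-(1 + 2*H))) := by
  set p : ℝ := 1 + 2*H with hp
  have hp1 : 1 < p := by rw [hp]; linarith
  have hp2 : p < 2 := by rw [hp]; linarith
  have hmeas : AEStronglyMeasurable (fun x : ℝ => (1 - Real.cos x) * |x| ^ (-p)) volume :=
    ((measurable_const.sub Real.measurable_cos).mul
      (measurable_abs.pow_const _)).aestronglyMeasurable
  have hnonneg : ∀ x : ℝ, 0 ≤ (1 - Real.cos x) * |x| ^ (-p) := fun x =>
    mul_nonneg (by nlinarith [Real.cos_le_one x]) (Real.rpow_nonneg (abs_nonneg x) _)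
  have hub1 : ∀ x : ℝ, (1 - Real.cos x) * |x| ^ (-p) ≤ (1/2) * |x| ^ (2 - p) := by
    intro x
    rcases eq_or_ne x 0 with rfl | hx
    · rw [abs_zero, Real.zero_rpow (show -p ≠ 0 by intro h; nlinarith),
        Real.zero_rpow (show 2 - p ≠ 0 by intro h; nlinarith)]
      simp
    · have hx' : 0 < |x| := abs_pos.2 hx
      have e : |x| ^ (2 - p) = x ^ 2 * |x| ^ (-p) := by
        rw [show (2 : ℝ) - p = 2 + (-p) by ring, Real.rpow_add hx',
          show ((2:ℝ)) = ((2:ℕ):ℝ) by norm_num, Real.rpow_natCast, _root_.sq_abs]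
      rw [e]
      have hc := Real.one_sub_sq_div_two_le_cos (x := x)
      nlinarith [Real.rpow_nonneg (abs_nonneg x) (-p)]
  have hub2 : ∀ x : ℝ, (1 - Real.cos x) * |x| ^ (-p) ≤ 2 * |x| ^ (-p) := fun x =>
    mul_le_mul_of_nonneg_right (by nlinarith [Real.neg_one_le_cos x])
      (Real.rpow_nonneg (abs_nonneg x) _)
  have hIoi : IntegrableOn (fun x : ℝ => (1 - Real.cos x) * |x| ^ (-p)) (Set.Ioi 1) := by
    refine Integrable.mono'
      ((integrableOn_Ioi_rpow_of_lt (show -p < -1 by linarith) one_pos).const_mul 2)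
      hmeas.restrict ?_
    filter_upwards [ae_restrict_mem measurableSet_Ioi] with x hx
    rw [Real.norm_eq_abs, _root_.abs_of_nonneg (hnonneg x)]
    have h1x : (1:ℝ) < x := hx
    calc (1 - Real.cos x) * |x| ^ (-p) ≤ 2 * |x| ^ (-p) := hub2 x
      _ = 2 * x ^ (-p) := by rw [abs_of_pos (by linarith)]
  have hIcc : IntegrableOn (fun x : ℝ => (1 - Real.cos x) * |x| ^ (-p)) (Set.Icc (-1) 1) := by
    have hcont : ContinuousOn (fun x : ℝ => (1/2) * |x| ^ (2 - p)) (Set.Icc (-1:ℝ) 1) :=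
      (continuous_const.mul
        (_root_.continuous_abs.rpow_const (fun x => Or.inr (by linarith)))).continuousOn
    refine Integrable.mono' (hcont.integrableOn_compact isCompact_Icc) hmeas.restrict ?_
    refine ae_of_all _ fun x => ?_
    rw [Real.norm_eq_abs, _root_.abs_of_nonneg (hnonneg x)]
    exact hub1 x
  have hmap : ((volume : Measure ℝ).restrict (Set.Ioi (1:ℝ))).map Neg.neg
      = volume.restrict (Set.Iio (-1:ℝ)) := by
    conv => rhs; rw [← Measure.map_neg_eq_self (volume : Measure ℝ),
      MeasurableEmbedding.restrict_map measurableEmbedding_neg]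
    congr 1
    ext x
    simp
  have hIio : IntegrableOn (fun x : ℝ => (1 - Real.cos x) * |x| ^ (-p)) (Set.Iio (-1)) := by
    rw [IntegrableOn, ← hmap, measurableEmbedding_neg.integrable_map_iff]
    have : ((fun x : ℝ => (1 - Real.cos x) * |x| ^ (-p)) ∘ Neg.neg)
        = fun x : ℝ => (1 - Real.cos x) * |x| ^ (-p) := by
      funext x; simp [Function.comp, Real.cos_neg]
    rw [this]
    exact hIoi
  rw [← integrableOn_univ,
    show (Set.univ : Set ℝ) = Set.Iio (-1) ∪ (Set.Icc (-1) 1 ∪ Set.Ioi 1) by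
      ext x
      simp only [Set.mem_univ, true_iff, Set.mem_union, Set.mem_Iio, Set.mem_Icc, Set.mem_Ioi]
      rcases lt_or_ge x (-1) with h | h
      · exact Or.inl h
      · rcases le_or_gt x 1 with h' | h'
        · exact Or.inr (Or.inl ⟨h, h'⟩)
        · exact Or.inr (Or.inr h'),
    integrableOn_union, integrableOn_union]
  exact ⟨hIio, hIcc, hIoi⟩

private lemma scale_ptwise19 {H h : ℝ} (hne : h ≠ 0) (ξ : ℝ) :
    (1 - Real.cos (h * ξ)) * |ξ| ^ (-(1 + 2*H))
      = |h| ^ (1 + 2*H) * ((1 - Real.cos (h * ξ)) * |h * ξ| ^ (-(1 + 2*H))) := by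
  have hh : 0 < |h| := abs_pos.2 hne
  rcases eq_or_ne ξ 0 with rfl | hξ
  · simp
  · rw [abs_mul, Real.mul_rpow (abs_nonneg h) (abs_nonneg ξ)]
    have e : |h| ^ (1 + 2*H) * |h| ^ (-(1 + 2*H)) = 1 := by
      rw [← Real.rpow_add hh, show (1 + 2*H) + (-(1 + 2*H)) = 0 by ring, Real.rpow_zero]
    calc (1 - Real.cos (h * ξ)) * |ξ| ^ (-(1 + 2*H))
        = (|h| ^ (1 + 2*H) * |h| ^ (-(1 + 2*H)))
            * ((1 - Real.cos (h * ξ)) * |ξ| ^ (-(1 + 2*H))) := by rw [e, one_mul]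
      _ = |h| ^ (1 + 2*H)
            * ((1 - Real.cos (h * ξ)) * (|h| ^ (-(1 + 2*H)) * |ξ| ^ (-(1 + 2*H)))) := by ring

private lemma scale_eq19 {H h : ℝ} (hne : h ≠ 0) :
    ∫ ξ : ℝ, (1 - Real.cos (h * ξ)) * |ξ| ^ (-(1 + 2*H))
      = |h| ^ (2*H) * ∫ x : ℝ, (1 - Real.cos x) * |x| ^ (-(1 + 2*H)) := by
  have hh : 0 < |h| := abs_pos.2 hne
  simp_rw [scale_ptwise19 hne]
  rw [integral_const_mul,
    Measure.integral_comp_mul_left (fun x : ℝ => (1 - Real.cos x) * |x| ^ (-(1 + 2*H))) h,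
    smul_eq_mul, abs_inv, ← mul_assoc]
  congr 1
  rw [show |h|⁻¹ = |h| ^ (-1 : ℝ) by rw [Real.rpow_neg_one], ← Real.rpow_add hh]
  norm_num

private lemma integrable_scaled19 {H h : ℝ} (h0 : 0 < H) (h2 : H < 1/2) (hne : h ≠ 0) :
    Integrable (fun ξ : ℝ => (1 - Real.cos (h * ξ)) * |ξ| ^ (-(1 + 2*H))) := by
  have h1 := ((integrable_G19 h0 h2).comp_mul_left' hne).const_mul (|h| ^ (1 + 2*H))
  exact h1.congr (ae_of_all _ fun ξ => (scale_ptwise19 hne ξ).symm)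

private lemma inner_le19 {H h K : ℝ} (h0 : 0 < H) (h2 : H < 1/2) (hne : h ≠ 0) (hK : 0 ≤ K)
    (f : ℝ → ℝ) (hf0 : ∀ ξ, 0 ≤ f ξ)
    (hfb : ∀ ξ, f ξ ≤ K * ((1 - Real.cos (h * ξ)) * |ξ| ^ (-(1 + 2*H)))) :
    ∫ ξ : ℝ, f ξ
      ≤ K * (|h| ^ (2*H) * ∫ x : ℝ, (1 - Real.cos x) * |x| ^ (-(1 + 2*H))) := by
  calc ∫ ξ : ℝ, f ξ
      ≤ ∫ ξ : ℝ, K * ((1 - Real.cos (h * ξ)) * |ξ| ^ (-(1 + 2*H))) :=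
        integral_mono_of_nonneg (ae_of_all _ hf0)
          ((integrable_scaled19 h0 h2 hne).const_mul K) (ae_of_all _ hfb)
    _ = K * (|h| ^ (2*H) * ∫ x : ℝ, (1 - Real.cos x) * |x| ^ (-(1 + 2*H))) := by
        rw [integral_const_mul, scale_eq19 hne]

private lemma frac_bound19 {H T : ℝ} (h0 : 0 < H) (h2 : H < 1/2) {s : ℝ} (ξ : ℝ)
    (hs0 : 0 ≤ s) (hsT : s ≤ T) :
    s^2 / (1 + s^2 * ξ^2) * |ξ| ^ (1 - 2*H) ≤ (max (T^2) 1) * |ξ| ^ (-(1 + 2*H)) := by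
  set K := max (T^2) 1
  have hK1 : 1 ≤ K := le_max_right _ _
  have hKT : T^2 ≤ K := le_max_left _ _
  have hden : 0 < 1 + s^2 * ξ^2 := by positivity
  rcases eq_or_ne ξ 0 with rfl | hξ
  · rw [abs_zero, Real.zero_rpow (by intro hh; nlinarith : (1:ℝ) - 2*H ≠ 0),
      Real.zero_rpow (by intro hh; nlinarith : -(1 + 2*H) ≠ 0)]
    simp
  · have hξ' : 0 < |ξ| := abs_pos.2 hξ
    rcases le_or_gt (|ξ|) 1 with hle | hgt
    · have hfrac : s^2 / (1 + s^2 * ξ^2) ≤ K := by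
        rw [div_le_iff₀ hden]; nlinarith [sq_nonneg (s*ξ)]
      have hexp : |ξ| ^ (1 - 2*H) ≤ |ξ| ^ (-(1 + 2*H)) :=
        Real.rpow_le_rpow_of_exponent_ge hξ' hle (by linarith)
      exact mul_le_mul hfrac hexp (Real.rpow_nonneg (abs_nonneg ξ) _) (by linarith)
    · have hfrac : s^2 / (1 + s^2 * ξ^2) ≤ 1 / ξ^2 := by
        rw [div_le_div_iff₀ hden (by positivity)]; nlinarith
      have e : (1 / ξ^2) * |ξ| ^ (1 - 2*H) = |ξ| ^ (-(1 + 2*H)) := by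
        rw [show -(1 + 2*H) = (-2) + (1 - 2*H) by ring, Real.rpow_add hξ',
          show ((-2:ℝ)) = -((2:ℕ):ℝ) by norm_num, Real.rpow_neg (abs_nonneg ξ),
          Real.rpow_natCast, _root_.sq_abs, one_div]
      calc s^2 / (1 + s^2 * ξ^2) * |ξ| ^ (1 - 2*H)
          ≤ (1 / ξ^2) * |ξ| ^ (1 - 2*H) :=
            mul_le_mul_of_nonneg_right hfrac (Real.rpow_nonneg (abs_nonneg ξ) _)
        _ = |ξ| ^ (-(1 + 2*H)) := e
        _ ≤ K * |ξ| ^ (-(1 + 2*H)) := by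
            nlinarith [Real.rpow_nonneg (abs_nonneg ξ) (-(1 + 2*H))]

private lemma sin_bound19 (s ξ : ℝ) :
    (Real.sin (s * |ξ|) / ξ) ^ 2 ≤ 2 * (s ^ 2 / (1 + s ^ 2 * ξ ^ 2)) := by
  rcases eq_or_ne ξ 0 with rfl | hξ
  · simp; positivity
  · have hden : 0 < 1 + s^2 * ξ^2 := by positivity
    have hξ2 : 0 < ξ^2 := by positivity
    rw [div_pow, mul_div_assoc', div_le_div_iff₀ hξ2 hden]
    have h1 : Real.sin (s * |ξ|) ^ 2 ≤ (s * |ξ|) ^ 2 := Real.sin_sq_le_sq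
    have h2 : Real.sin (s * |ξ|) ^ 2 ≤ 1 := Real.sin_sq_le_one _
    have h3 : (s * |ξ|)^2 = s^2 * ξ^2 := by rw [mul_pow, _root_.sq_abs]
    nlinarith [sq_nonneg (s*ξ)]

private lemma abs_exp_sub_one19 (θ : ℝ) :
    ‖Complex.exp ((θ:ℂ) * Complex.I) - 1‖ ^ 2 = 2 * (1 - Real.cos θ) := by
  rw [Complex.exp_mul_I, ← Complex.ofReal_cos, ← Complex.ofReal_sin, Complex.sq_norm]
  simp [Complex.normSq_apply, Complex.cos_ofReal_re, Complex.sin_ofReal_re]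
  nlinarith [Real.sin_sq_add_cos_sq θ]

theorem stmt19 (H T : ℝ) (hH : H ∈ Set.Ioo (0 : ℝ) (1 / 2)) (hT : 0 < T) :
    ∃ C C' : ℝ, 0 < C ∧ 0 < C' ∧
      (∀ h : ℝ,
        (∫ s in (0 : ℝ)..T, ∫ ξ : ℝ,
            (1 - Real.cos (h * ξ)) * (s ^ 2 / (1 + s ^ 2 * ξ ^ 2)) * |ξ| ^ (1 - 2 * H))
          ≤ C * |h| ^ (2 * H)) ∧
      (∀ s ξ : ℝ, (Real.sin (s * |ξ|) / ξ) ^ 2 ≤ 2 * (s ^ 2 / (1 + s ^ 2 * ξ ^ 2))) ∧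
      (∀ h : ℝ,
        (∫ s in (0 : ℝ)..T, ∫ ξ : ℝ,
            ‖Complex.exp (Complex.I * (h : ℂ) * (ξ : ℂ)) - 1‖ ^ 2 *
              (Real.sin (s * |ξ|) / |ξ|) ^ 2 * |ξ| ^ (1 - 2 * H))
          ≤ C' * |h| ^ (2 * H)) := by
  obtain ⟨hH0, hH2⟩ := hH
  have hH2' : H < 1/2 := hH2
  set K : ℝ := max (T^2) 1 with hKdef
  have hK1 : 1 ≤ K := le_max_right _ _
  have hK0 : 0 ≤ K := le_trans zero_le_one hK1
  set c : ℝ := ∫ x : ℝ, (1 - Real.cos x) * |x| ^ (-(1 + 2*H)) with hcdef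
  have hc0 : 0 ≤ c := integral_nonneg fun x =>
    mul_nonneg (by nlinarith [Real.cos_le_one x]) (Real.rpow_nonneg (abs_nonneg x) _)
  have h2H : (2:ℝ) * H ≠ 0 := by positivity
  have hcosnn : ∀ y : ℝ, 0 ≤ 1 - Real.cos y := fun y => by nlinarith [Real.cos_le_one y]
  have hrnn : ∀ ξ : ℝ, 0 ≤ |ξ| ^ (1 - 2*H) := fun ξ => Real.rpow_nonneg (abs_nonneg ξ) _
  refine ⟨T * (K * c) + 1, T * (4 * K * c) + 1,
    by nlinarith [mul_nonneg hT.le (mul_nonneg hK0 hc0)],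
    by nlinarith [mul_nonneg hT.le (mul_nonneg (by linarith : (0:ℝ) ≤ 4*K) hc0)],
    ?_, sin_bound19, ?_⟩
  · intro h
    rcases eq_or_ne h 0 with rfl | hne
    · simp [Real.zero_rpow h2H]
    · have hM : 0 ≤ K * (|h| ^ (2*H) * c) :=
        mul_nonneg hK0 (mul_nonneg (Real.rpow_nonneg (abs_nonneg h) _) hc0)
      have houter := outer_le19 hT.le hM
        (fun s => ∫ ξ : ℝ,
          (1 - Real.cos (h * ξ)) * (s ^ 2 / (1 + s ^ 2 * ξ ^ 2)) * |ξ| ^ (1 - 2 * H))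
        (by
          intro s hs
          refine inner_le19 hH0 hH2' hne (by linarith)
            _ (fun ξ => ?_) (fun ξ => ?_)
          · exact mul_nonneg (mul_nonneg (hcosnn _) (by positivity)) (hrnn ξ)
          · have hfb := frac_bound19 hH0 hH2' (s := s) ξ hs.1 hs.2
            calc (1 - Real.cos (h * ξ)) * (s ^ 2 / (1 + s ^ 2 * ξ ^ 2)) * |ξ| ^ (1 - 2 * H)
                = (1 - Real.cos (h * ξ))
                    * (s ^ 2 / (1 + s ^ 2 * ξ ^ 2) * |ξ| ^ (1 - 2 * H)) := by ring
              _ ≤ (1 - Real.cos (h * ξ)) * (K * |ξ| ^ (-(1 + 2*H))) :=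
                  mul_le_mul_of_nonneg_left hfb (hcosnn _)
              _ = K * ((1 - Real.cos (h * ξ)) * |ξ| ^ (-(1 + 2*H))) := by ring)
      have hfinal : T * (K * (|h| ^ (2*H) * c)) ≤ (T * (K * c) + 1) * |h| ^ (2*H) := by
        have := Real.rpow_nonneg (abs_nonneg h) (2*H)
        nlinarith
      exact le_trans houter hfinal
  · intro h
    rcases eq_or_ne h 0 with rfl | hne
    · simp [Real.zero_rpow h2H]
    · have hM : 0 ≤ (4*K) * (|h| ^ (2*H) * c) :=
        mul_nonneg (by linarith) (mul_nonneg (Real.rpow_nonneg (abs_nonneg h) _) hc0)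
      have hptw : ∀ s ξ : ℝ, 0 ≤ s → s ≤ T →
          ‖Complex.exp (Complex.I * (h : ℂ) * (ξ : ℂ)) - 1‖ ^ 2 *
              (Real.sin (s * |ξ|) / |ξ|) ^ 2 * |ξ| ^ (1 - 2 * H)
            ≤ (4*K) * ((1 - Real.cos (h * ξ)) * |ξ| ^ (-(1 + 2*H))) := by
        intro s ξ hs0 hsT
        have harg : Complex.I * (h : ℂ) * (ξ : ℂ) = ((h * ξ : ℝ) : ℂ) * Complex.I := by
          push_cast; ring
        have e1 : ‖Complex.exp (Complex.I * (h : ℂ) * (ξ : ℂ)) - 1‖ ^ 2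
            = 2 * (1 - Real.cos (h * ξ)) := by rw [harg, abs_exp_sub_one19]
        have e2 : (Real.sin (s * |ξ|) / |ξ|) ^ 2 ≤ 2 * (s ^ 2 / (1 + s ^ 2 * ξ ^ 2)) := by
          rw [div_pow, _root_.sq_abs, ← div_pow]
          exact sin_bound19 s ξ
        have hfb := frac_bound19 hH0 hH2' (s := s) ξ hs0 hsT
        rw [e1]
        calc 2 * (1 - Real.cos (h * ξ)) * (Real.sin (s * |ξ|) / |ξ|) ^ 2 * |ξ| ^ (1 - 2 * H)
            ≤ 2 * (1 - Real.cos (h * ξ)) * (2 * (s ^ 2 / (1 + s ^ 2 * ξ ^ 2)))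
                * |ξ| ^ (1 - 2 * H) := by
              refine mul_le_mul_of_nonneg_right
                (mul_le_mul_of_nonneg_left e2 (by nlinarith [Real.cos_le_one (h*ξ)])) (hrnn ξ)
          _ = 4 * ((1 - Real.cos (h * ξ))
                * (s ^ 2 / (1 + s ^ 2 * ξ ^ 2) * |ξ| ^ (1 - 2 * H))) := by ring
          _ ≤ 4 * ((1 - Real.cos (h * ξ)) * (K * |ξ| ^ (-(1 + 2*H)))) := by
              refine mul_le_mul_of_nonneg_left
                (mul_le_mul_of_nonneg_left hfb (hcosnn _)) (by norm_num)
          _ = (4*K) * ((1 - Real.cos (h * ξ)) * |ξ| ^ (-(1 + 2*H))) := by ring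
      have houter := outer_le19 hT.le hM
        (fun s => ∫ ξ : ℝ,
          ‖Complex.exp (Complex.I * (h : ℂ) * (ξ : ℂ)) - 1‖ ^ 2 *
              (Real.sin (s * |ξ|) / |ξ|) ^ 2 * |ξ| ^ (1 - 2 * H))
        (by
          intro s hs
          refine inner_le19 hH0 hH2' hne (by linarith)
            _ (fun ξ => ?_) (fun ξ => hptw s ξ hs.1 hs.2)
          exact mul_nonneg (mul_nonneg (sq_nonneg _) (sq_nonneg _)) (hrnn ξ))
      have hfinal : T * ((4*K) * (|h| ^ (2*H) * c)) ≤ (T * (4 * K * c) + 1) * |h| ^ (2*H) := by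
        have := Real.rpow_nonneg (abs_nonneg h) (2*H)
        nlinarith
      exact le_trans houter hfinal
end
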